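/- In the one-sample bivariate setting, the remainder term B_n = ∫∫ (F̂₁(x) − F₁(x)) L₁(F₂(y)) d(F̂_n − F)(x,y) satisfies √n · B_n → 0 in probability as n → ∞, where the integral of a function g against d(F̂_n − F) means n^{-1}Σ_{i=1}^n g(X_{i,1},X_{i,2}) − E[g(X_1,X_2)]. -/

import Mathlib

open MeasureTheory ProbabilityTheory Filter

noncomputable section

/-- The first shifted normalized Legendre polynomial on `[0,1]`: `L₁(x) = √3 (2x-1)`. -/
def Leg1 (x : ℝ) : ℝ := Real.sqrt 3 * (2 * x - 1)

variable {Ω : Type*} [MeasurableSpace Ω]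

/-- Empirical cumulative distribution function of the sample `Z 0, …, Z (n-1)`. -/
def ecdf (Z : ℕ → Ω → ℝ) (n : ℕ) (ω : Ω) (x : ℝ) : ℝ :=
  (n : ℝ)⁻¹ * ∑ i ∈ Finset.range n, (if Z i ω ≤ x then (1 : ℝ) else 0)

/-- The remainder term
`B_n = ∫∫ (F̂₁(x) - F₁(x)) L₁(F₂(y)) d(F̂_n - F)(x,y)`, where integrating a
function `g` against `d(F̂_n - F)` means `n⁻¹ ∑ᵢ g(X_{i,1}, X_{i,2}) - E[g(X₁,X₂)]`. -/
def Bterm (P : Measure Ω) (X₁ X₂ : ℕ → Ω → ℝ) (F₁ F₂ : ℝ → ℝ) (n : ℕ) (ω : Ω) : ℝ :=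
  (n : ℝ)⁻¹ * ∑ i ∈ Finset.range n,
      (ecdf X₁ n ω (X₁ i ω) - F₁ (X₁ i ω)) * Leg1 (F₂ (X₂ i ω))
    - ∫ ω', (ecdf X₁ n ω (X₁ 0 ω') - F₁ (X₁ 0 ω')) * Leg1 (F₂ (X₂ 0 ω')) ∂P

/-! ### Auxiliary kernels -/

/-- The kernel `h(a,z) = (1_{a ≤ z₁} - F₁ z₁) L₁(F₂ z₂)`. -/
def hker (F₁ F₂ : ℝ → ℝ) (a : ℝ) (z : ℝ × ℝ) : ℝ :=
  ((if a ≤ z.1 then (1:ℝ) else 0) - F₁ z.1) * Leg1 (F₂ z.2)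

/-- `H(a) = ∫ h(a,z) dμ(z)`. -/
def Hfun (μ : Measure (ℝ × ℝ)) (F₁ F₂ : ℝ → ℝ) (a : ℝ) : ℝ := ∫ z, hker F₁ F₂ a z ∂μ

/-- The centered kernel `k(a,z) = h(a,z) - H(a)`. -/
def kker (μ : Measure (ℝ × ℝ)) (F₁ F₂ : ℝ → ℝ) (a : ℝ) (z : ℝ × ℝ) : ℝ :=
  hker F₁ F₂ a z - Hfun μ F₁ F₂ a

lemma Leg1_abs_le {x : ℝ} (h0 : 0 ≤ x) (h1 : x ≤ 1) : |Leg1 x| ≤ 2 := by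
  have h3 : Real.sqrt 3 ≤ 2 := by
    rw [show (2:ℝ) = Real.sqrt 4 by
      rw [show (4:ℝ) = 2^2 by norm_num, Real.sqrt_sq (by norm_num)]]
    exact Real.sqrt_le_sqrt (by norm_num)
  have : |2 * x - 1| ≤ 1 := by rw [abs_le]; constructor <;> linarith
  calc |Leg1 x| = Real.sqrt 3 * |2 * x - 1| := by
        rw [Leg1, abs_mul, abs_of_nonneg (Real.sqrt_nonneg 3)]
    _ ≤ 2 * 1 := mul_le_mul h3 this (abs_nonneg _) (by norm_num)
    _ = 2 := by norm_num

lemma hker_abs_le' {F₁ F₂ : ℝ → ℝ} (hF₁ : ∀ x, 0 ≤ F₁ x ∧ F₁ x ≤ 1)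
    (hF₂ : ∀ x, 0 ≤ F₂ x ∧ F₂ x ≤ 1) (a : ℝ) (z : ℝ × ℝ) : |hker F₁ F₂ a z| ≤ 2 := by
  rw [hker, abs_mul]
  have h1 : |(if a ≤ z.1 then (1:ℝ) else 0) - F₁ z.1| ≤ 1 := by
    rcases hF₁ z.1 with ⟨h0, h1⟩
    split <;> (rw [abs_le]; constructor <;> linarith)
  have h2 : |Leg1 (F₂ z.2)| ≤ 2 := Leg1_abs_le (hF₂ z.2).1 (hF₂ z.2).2
  calc |(if a ≤ z.1 then (1:ℝ) else 0) - F₁ z.1| * |Leg1 (F₂ z.2)| ≤ 1 * 2 :=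
        mul_le_mul h1 h2 (abs_nonneg _) (by norm_num)
    _ = 2 := by norm_num

lemma hker_measurable' {F₁ F₂ : ℝ → ℝ} (hF₁ : Measurable F₁) (hF₂ : Measurable F₂) :
    Measurable (fun p : ℝ × (ℝ × ℝ) => hker F₁ F₂ p.1 p.2) := by
  apply Measurable.mul
  · apply Measurable.sub
    · have : MeasurableSet {p : ℝ × (ℝ × ℝ) | p.1 ≤ p.2.1} :=
        measurableSet_le measurable_fst (measurable_fst.comp measurable_snd)
      exact Measurable.ite this measurable_const measurable_const
    · exact hF₁.comp (measurable_fst.comp measurable_snd)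
  · have : Measurable Leg1 := by
      unfold Leg1
      exact measurable_const.mul ((measurable_const.mul measurable_id).sub measurable_const)
    exact this.comp (hF₂.comp (measurable_snd.comp measurable_snd))

section kernel

set_option linter.unusedSectionVars false

variable {F₁ F₂ : ℝ → ℝ} {μ : Measure (ℝ × ℝ)} [IsProbabilityMeasure μ]
variable (hF₁ : ∀ x, 0 ≤ F₁ x ∧ F₁ x ≤ 1) (hF₂ : ∀ x, 0 ≤ F₂ x ∧ F₂ x ≤ 1)
variable (hF₁m : Measurable F₁) (hF₂m : Measurable F₂)
variable (hcdf : ∀ x, F₁ x = (μ {z : ℝ × ℝ | z.1 ≤ x}).toReal)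

include hF₁m hF₂m hF₁ hF₂ in
lemma hker_integrable (a : ℝ) : Integrable (hker F₁ F₂ a) μ := by
  refine ⟨((hker_measurable' hF₁m hF₂m).comp
    (measurable_const.prodMk measurable_id)).aestronglyMeasurable, ?_⟩
  exact HasFiniteIntegral.of_bounded (C := 2) (ae_of_all _ fun z => hker_abs_le' hF₁ hF₂ a z)

include hF₁ hF₂ in
lemma Hfun_abs_le (a : ℝ) : |Hfun μ F₁ F₂ a| ≤ 2 := by
  rw [Hfun, ← Real.norm_eq_abs]
  calc ‖∫ z, hker F₁ F₂ a z ∂μ‖ ≤ 2 * (μ Set.univ).toReal :=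
        norm_integral_le_of_norm_le_const (ae_of_all _ fun z => hker_abs_le' hF₁ hF₂ a z)
    _ = 2 := by simp

include hF₁m hF₂m in
lemma Hfun_measurable : Measurable (Hfun μ F₁ F₂) := by
  have := (hker_measurable' hF₁m hF₂m (F₁ := F₁) (F₂ := F₂)).stronglyMeasurable
  exact this.integral_prod_right'.measurable

include hF₁ hF₂ in
lemma kker_abs_le (a : ℝ) (z : ℝ × ℝ) : |kker μ F₁ F₂ a z| ≤ 4 := by
  have h1 := hker_abs_le' hF₁ hF₂ a z
  have h2 := Hfun_abs_le (μ := μ) hF₁ hF₂ a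
  rw [kker]
  calc |hker F₁ F₂ a z - Hfun μ F₁ F₂ a| ≤ |hker F₁ F₂ a z| + |Hfun μ F₁ F₂ a| := abs_sub _ _
    _ ≤ 4 := by linarith

include hF₁m hF₂m in
lemma kker_measurable : Measurable (fun p : ℝ × (ℝ × ℝ) => kker μ F₁ F₂ p.1 p.2) :=
  (hker_measurable' hF₁m hF₂m).sub ((Hfun_measurable hF₁m hF₂m).comp measurable_fst)

include hF₁ hF₂ hF₁m hF₂m in
lemma kker_integral_snd (a : ℝ) : ∫ z, kker μ F₁ F₂ a z ∂μ = 0 := by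
  rw [show kker μ F₁ F₂ a = fun z => hker F₁ F₂ a z - Hfun μ F₁ F₂ a from rfl]
  rw [integral_sub (hker_integrable hF₁ hF₂ hF₁m hF₂m a) (integrable_const _)]
  simp [Hfun]

include hcdf in
lemma hker_integral_fst (z : ℝ × ℝ) : ∫ c, hker F₁ F₂ c.1 z ∂μ = 0 := by
  have hmk : Measurable fun c : ℝ × ℝ => (if c.1 ≤ z.1 then (1:ℝ) else 0) :=
    Measurable.ite (measurableSet_le measurable_fst measurable_const)
      measurable_const measurable_const
  have hint : Integrable (fun c : ℝ × ℝ => (if c.1 ≤ z.1 then (1:ℝ) else 0)) μ := by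
    refine ⟨hmk.aestronglyMeasurable, ?_⟩
    refine HasFiniteIntegral.of_bounded (C := 1) (ae_of_all _ fun c => ?_)
    split <;> simp
  have key : ∫ c : ℝ × ℝ, (if c.1 ≤ z.1 then (1:ℝ) else 0) ∂μ = F₁ z.1 := by
    have : (fun c : ℝ × ℝ => (if c.1 ≤ z.1 then (1:ℝ) else 0))
        = Set.indicator {c : ℝ × ℝ | c.1 ≤ z.1} (1 : ℝ × ℝ → ℝ) := by
      ext c; simp [Set.indicator_apply, Set.mem_setOf_eq]
    rw [this, integral_indicator_one (measurableSet_le measurable_fst measurable_const),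
      hcdf z.1]
    rfl
  calc ∫ c, hker F₁ F₂ c.1 z ∂μ
      = (∫ c : ℝ × ℝ, ((if c.1 ≤ z.1 then (1:ℝ) else 0) - F₁ z.1) ∂μ) * Leg1 (F₂ z.2) := by
        rw [← integral_mul_const]; rfl
    _ = 0 := by
        rw [integral_sub hint (integrable_const _), key]; simp

include hF₁ hF₂ hF₁m hF₂m hcdf in
lemma kker_integral_fst (z : ℝ × ℝ) : ∫ c, kker μ F₁ F₂ c.1 z ∂μ = 0 := by
  have h1 : Integrable (fun c : ℝ × ℝ => hker F₁ F₂ c.1 z) μ := by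
    refine ⟨((hker_measurable' hF₁m hF₂m).comp
      (measurable_fst.prodMk measurable_const)).aestronglyMeasurable, ?_⟩
    exact HasFiniteIntegral.of_bounded (C := 2) (ae_of_all _ fun c => hker_abs_le' hF₁ hF₂ _ z)
  have hHm : Measurable (Hfun μ F₁ F₂) := Hfun_measurable hF₁m hF₂m
  have h2 : Integrable (fun c : ℝ × ℝ => Hfun μ F₁ F₂ c.1) μ := by
    refine ⟨(hHm.comp measurable_fst).aestronglyMeasurable, ?_⟩
    refine HasFiniteIntegral.of_bounded (C := 2) (ae_of_all _ fun c => ?_)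
    rw [Real.norm_eq_abs]
    exact Hfun_abs_le hF₁ hF₂ _
  have hswap : ∫ c : ℝ × ℝ, Hfun μ F₁ F₂ c.1 ∂μ = 0 := by
    have hint : Integrable (fun p : (ℝ × ℝ) × (ℝ × ℝ) => hker F₁ F₂ p.1.1 p.2) (μ.prod μ) := by
      refine ⟨((hker_measurable' hF₁m hF₂m).comp
        ((measurable_fst.comp measurable_fst).prodMk measurable_snd)).aestronglyMeasurable, ?_⟩
      exact HasFiniteIntegral.of_bounded (C := 2) (ae_of_all _ fun p => hker_abs_le' hF₁ hF₂ _ _)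
    have hsw := integral_integral_swap (f := fun (c w : ℝ × ℝ) => hker F₁ F₂ c.1 w) hint
    calc ∫ c : ℝ × ℝ, Hfun μ F₁ F₂ c.1 ∂μ
        = ∫ c : ℝ × ℝ, ∫ w, hker F₁ F₂ c.1 w ∂μ ∂μ := rfl
      _ = ∫ w, ∫ c : ℝ × ℝ, hker F₁ F₂ c.1 w ∂μ ∂μ := hsw
      _ = 0 := by
          rw [← integral_zero (ℝ × ℝ) ℝ (μ := μ)]
          exact integral_congr_ae (ae_of_all _ fun w => hker_integral_fst hcdf w)
  calc ∫ c, kker μ F₁ F₂ c.1 z ∂μ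
      = ∫ c : ℝ × ℝ, (hker F₁ F₂ c.1 z - Hfun μ F₁ F₂ c.1) ∂μ := rfl
    _ = 0 := by
        rw [integral_sub h1 h2, hker_integral_fst hcdf z, hswap, sub_zero]

end kernel

/-! ### Independence: vanishing of mixed moments with a free index -/

section indep

variable {P : Measure Ω} [IsProbabilityMeasure P] {Z : ℕ → Ω → ℝ × ℝ}

lemma integral_vanish (hZm : ∀ i, Measurable (Z i))
    (hindep : iIndepFun Z P)
    (l a b c : ℕ) (hal : a ≠ l) (hbl : b ≠ l) (hcl : c ≠ l)
    (Φ : (ℝ × ℝ) → (ℝ × ℝ) × (ℝ × ℝ) × (ℝ × ℝ) → ℝ) {C : ℝ}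
    (hΦm : Measurable (fun p : (ℝ × ℝ) × ((ℝ × ℝ) × (ℝ × ℝ) × (ℝ × ℝ)) => Φ p.1 p.2))
    (hΦb : ∀ z v, |Φ z v| ≤ C)
    (hz : ∀ v, ∫ z, Φ z v ∂(P.map (Z l)) = 0) :
    ∫ ω, Φ (Z l ω) (Z a ω, Z b ω, Z c ω) ∂P = 0 := by
  classical
  set W : Ω → (ℝ × ℝ) × (ℝ × ℝ) × (ℝ × ℝ) := fun ω => (Z a ω, Z b ω, Z c ω) with hW
  have hWm : Measurable W := (hZm a).prodMk ((hZm b).prodMk (hZm c))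
  have hdisj : Disjoint ({l} : Finset ℕ) ({a, b, c} : Finset ℕ) := by
    rw [Finset.disjoint_left]
    intro x hx
    simp only [Finset.mem_singleton] at hx
    subst hx
    simp only [Finset.mem_insert, Finset.mem_singleton]
    push_neg
    exact ⟨fun h => hal h.symm, fun h => hbl h.symm, fun h => hcl h.symm⟩
  have hbase := hindep.indepFun_finset {l} {a, b, c} hdisj hZm
  have hla : l ∈ ({l} : Finset ℕ) := Finset.mem_singleton_self l
  have ha' : a ∈ ({a, b, c} : Finset ℕ) := by simp
  have hb' : b ∈ ({a, b, c} : Finset ℕ) := by simp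
  have hc' : c ∈ ({a, b, c} : Finset ℕ) := by simp
  have hIF : IndepFun (Z l) W P := by
    have := hbase.comp (_mγ := inferInstance) (φ := fun v : (({l} : Finset ℕ) → ℝ × ℝ) => v ⟨l, hla⟩)
      (ψ := fun v : (({a, b, c} : Finset ℕ) → ℝ × ℝ) =>
        (v ⟨a, ha'⟩, v ⟨b, hb'⟩, v ⟨c, hc'⟩))
      (by fun_prop)
      (by fun_prop)
    exact this
  have hpairm : Measurable (fun ω => (Z l ω, W ω)) := (hZm l).prodMk hWm
  have hmap : P.map (fun ω => (Z l ω, W ω)) = (P.map (Z l)).prod (P.map W) :=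
    (indepFun_iff_map_prod_eq_prod_map_map (hZm l).aemeasurable hWm.aemeasurable).mp hIF
  haveI : IsProbabilityMeasure (P.map (Z l)) := Measure.isProbabilityMeasure_map (hZm l).aemeasurable
  haveI : IsProbabilityMeasure (P.map W) := Measure.isProbabilityMeasure_map hWm.aemeasurable
  have hint : Integrable (fun p : (ℝ × ℝ) × ((ℝ × ℝ) × (ℝ × ℝ) × (ℝ × ℝ)) => Φ p.1 p.2)
      ((P.map (Z l)).prod (P.map W)) := by
    refine ⟨hΦm.aestronglyMeasurable, ?_⟩
    exact HasFiniteIntegral.of_bounded (C := C) (ae_of_all _ fun p => hΦb p.1 p.2)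
  calc ∫ ω, Φ (Z l ω) (W ω) ∂P
      = ∫ p : (ℝ × ℝ) × ((ℝ × ℝ) × (ℝ × ℝ) × (ℝ × ℝ)), Φ p.1 p.2
          ∂(P.map (fun ω => (Z l ω, W ω))) := by
        rw [integral_map hpairm.aemeasurable hΦm.aestronglyMeasurable]
    _ = ∫ p : (ℝ × ℝ) × ((ℝ × ℝ) × (ℝ × ℝ) × (ℝ × ℝ)), Φ p.1 p.2
          ∂((P.map (Z l)).prod (P.map W)) := by rw [hmap]
    _ = ∫ v, ∫ z, Φ z v ∂(P.map (Z l)) ∂(P.map W) := integral_prod_symm _ hint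
    _ = 0 := by simp [hz]

variable {F₁ F₂ : ℝ → ℝ} {μ : Measure (ℝ × ℝ)} [IsProbabilityMeasure μ]

/-- Vanishing when the first-argument index of the first factor is free. -/
lemma case_fst (hZm : ∀ i, Measurable (Z i))
    (hindep : iIndepFun Z P)
    (hF₁ : ∀ x, 0 ≤ F₁ x ∧ F₁ x ≤ 1) (hF₂ : ∀ x, 0 ≤ F₂ x ∧ F₂ x ≤ 1)
    (hF₁m : Measurable F₁) (hF₂m : Measurable F₂)
    (hcdf : ∀ x, F₁ x = (μ {z : ℝ × ℝ | z.1 ≤ x}).toReal)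
    (hmap : ∀ i, P.map (Z i) = μ)
    (l p1 q1 q2 : ℕ) (h1 : p1 ≠ l) (h2 : q1 ≠ l) (h3 : q2 ≠ l) :
    ∫ ω, kker μ F₁ F₂ (Z l ω).1 (Z p1 ω) * kker μ F₁ F₂ (Z q2 ω).1 (Z q1 ω) ∂P = 0 := by
  have hkm := kker_measurable (μ := μ) hF₁m hF₂m
  refine integral_vanish hZm hindep l p1 q1 q2 h1 h2 h3
    (fun z v => kker μ F₁ F₂ z.1 v.1 * kker μ F₁ F₂ v.2.2.1 v.2.1) (C := 16) ?_ ?_ ?_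
  · exact (hkm.comp ((measurable_fst.fst).prodMk (measurable_snd.fst))).mul
      (hkm.comp (((measurable_snd.snd.snd).fst).prodMk (measurable_snd.snd.fst)))
  · intro z v
    rw [abs_mul]
    have b1 := kker_abs_le (μ := μ) hF₁ hF₂ z.1 v.1
    have b2 := kker_abs_le (μ := μ) hF₁ hF₂ v.2.2.1 v.2.1
    nlinarith [abs_nonneg (kker μ F₁ F₂ z.1 v.1), abs_nonneg (kker μ F₁ F₂ v.2.2.1 v.2.1)]
  · intro v
    rw [hmap l, integral_mul_const, kker_integral_fst hF₁ hF₂ hF₁m hF₂m hcdf v.1, zero_mul]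

/-- Vanishing when the second-argument index of the first factor is free. -/
lemma case_snd (hZm : ∀ i, Measurable (Z i))
    (hindep : iIndepFun Z P)
    (hF₁ : ∀ x, 0 ≤ F₁ x ∧ F₁ x ≤ 1) (hF₂ : ∀ x, 0 ≤ F₂ x ∧ F₂ x ≤ 1)
    (hF₁m : Measurable F₁) (hF₂m : Measurable F₂)
    (hmap : ∀ i, P.map (Z i) = μ)
    (l p2 q1 q2 : ℕ) (h1 : p2 ≠ l) (h2 : q1 ≠ l) (h3 : q2 ≠ l) :
    ∫ ω, kker μ F₁ F₂ (Z p2 ω).1 (Z l ω) * kker μ F₁ F₂ (Z q2 ω).1 (Z q1 ω) ∂P = 0 := by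
  have hkm := kker_measurable (μ := μ) hF₁m hF₂m
  refine integral_vanish hZm hindep l p2 q1 q2 h1 h2 h3
    (fun z v => kker μ F₁ F₂ v.1.1 z * kker μ F₁ F₂ v.2.2.1 v.2.1) (C := 16) ?_ ?_ ?_
  · exact (hkm.comp ((measurable_snd.fst.fst).prodMk measurable_fst)).mul
      (hkm.comp (((measurable_snd.snd.snd).fst).prodMk (measurable_snd.snd.fst)))
  · intro z v
    rw [abs_mul]
    have b1 := kker_abs_le (μ := μ) hF₁ hF₂ v.1.1 z
    have b2 := kker_abs_le (μ := μ) hF₁ hF₂ v.2.2.1 v.2.1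
    nlinarith [abs_nonneg (kker μ F₁ F₂ v.1.1 z), abs_nonneg (kker μ F₁ F₂ v.2.2.1 v.2.1)]
  · intro v
    rw [hmap l, integral_mul_const, kker_integral_snd hF₁ hF₂ hF₁m hF₂m v.1.1, zero_mul]

end indep

/-! ### The algebraic identity for `Bterm` -/

lemma Bterm_eq {P : Measure Ω} [IsProbabilityMeasure P] {X₁ X₂ : ℕ → Ω → ℝ}
    {F₁ F₂ : ℝ → ℝ}
    (hX₁ : ∀ i, Measurable (X₁ i)) (hX₂ : ∀ i, Measurable (X₂ i))
    (hF₁m : Measurable F₁) (hF₂m : Measurable F₂)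
    (hF₁b : ∀ x, 0 ≤ F₁ x ∧ F₁ x ≤ 1) (hF₂b : ∀ x, 0 ≤ F₂ x ∧ F₂ x ≤ 1)
    {μ : Measure (ℝ × ℝ)} (hμ : μ = P.map (fun ω => (X₁ 0 ω, X₂ 0 ω)))
    (n : ℕ) (hn : 1 ≤ n) (ω : Ω) :
    Bterm P X₁ X₂ F₁ F₂ n ω = (n : ℝ)⁻¹ * (n : ℝ)⁻¹ *
      ∑ p ∈ Finset.range n ×ˢ Finset.range n,
        kker μ F₁ F₂ (X₁ p.2 ω) (X₁ p.1 ω, X₂ p.1 ω) := by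
  have hnne : (n : ℝ) ≠ 0 := Nat.cast_ne_zero.mpr (by omega)
  have hZ0 : Measurable (fun ω => (X₁ 0 ω, X₂ 0 ω)) := (hX₁ 0).prodMk (hX₂ 0)
  have hsum : ∀ x : ℝ, ecdf X₁ n ω x - F₁ x
      = (n : ℝ)⁻¹ * ∑ j ∈ Finset.range n, ((if X₁ j ω ≤ x then (1:ℝ) else 0) - F₁ x) := by
    intro x
    rw [Finset.sum_sub_distrib, Finset.sum_const, Finset.card_range, mul_sub, ecdf,
      nsmul_eq_mul, ← mul_assoc, inv_mul_cancel₀ hnne, one_mul]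
  have hprod : ∀ x y : ℝ, (ecdf X₁ n ω x - F₁ x) * Leg1 (F₂ y)
      = (n : ℝ)⁻¹ * ∑ j ∈ Finset.range n, hker F₁ F₂ (X₁ j ω) (x, y) := by
    intro x y
    rw [hsum x, mul_assoc, Finset.sum_mul]
    rfl
  have hintk : ∀ a : ℝ, Integrable (fun ω' => hker F₁ F₂ a (X₁ 0 ω', X₂ 0 ω')) P := by
    intro a
    refine ⟨((hker_measurable' hF₁m hF₂m).comp
      (measurable_const.prodMk hZ0)).aestronglyMeasurable, ?_⟩
    exact HasFiniteIntegral.of_bounded (C := 2)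
      (ae_of_all _ fun ω' => hker_abs_le' hF₁b hF₂b a _)
  have hH : ∀ a : ℝ, (∫ ω', hker F₁ F₂ a (X₁ 0 ω', X₂ 0 ω') ∂P) = Hfun μ F₁ F₂ a := by
    intro a
    rw [Hfun, hμ]
    exact (integral_map (f := fun z : ℝ × ℝ => hker F₁ F₂ a z) hZ0.aemeasurable
      (((hker_measurable' hF₁m hF₂m).comp
        (measurable_const.prodMk measurable_id)).aestronglyMeasurable)).symm
  have hint : (∫ ω', (ecdf X₁ n ω (X₁ 0 ω') - F₁ (X₁ 0 ω')) * Leg1 (F₂ (X₂ 0 ω')) ∂P)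
      = (n : ℝ)⁻¹ * ∑ j ∈ Finset.range n, Hfun μ F₁ F₂ (X₁ j ω) := by
    have : (fun ω' => (ecdf X₁ n ω (X₁ 0 ω') - F₁ (X₁ 0 ω')) * Leg1 (F₂ (X₂ 0 ω')))
        = fun ω' => (n : ℝ)⁻¹ *
            ∑ j ∈ Finset.range n, hker F₁ F₂ (X₁ j ω) (X₁ 0 ω', X₂ 0 ω') := by
      funext ω'; exact hprod _ _
    rw [this, integral_const_mul, integral_finset_sum _ (fun j _ => hintk (X₁ j ω))]
    congr 1
    exact Finset.sum_congr rfl fun j _ => hH (X₁ j ω)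
  rw [Bterm, hint]
  have h1 : ∑ i ∈ Finset.range n,
      (ecdf X₁ n ω (X₁ i ω) - F₁ (X₁ i ω)) * Leg1 (F₂ (X₂ i ω))
      = ∑ i ∈ Finset.range n, (n : ℝ)⁻¹ *
          ∑ j ∈ Finset.range n, hker F₁ F₂ (X₁ j ω) (X₁ i ω, X₂ i ω) :=
    Finset.sum_congr rfl fun i _ => hprod _ _
  rw [h1, Finset.sum_product]
  simp only [kker, Finset.sum_sub_distrib]
  rw [← Finset.mul_sum]
  have h2 : ∑ i ∈ Finset.range n, ∑ j ∈ Finset.range n, Hfun μ F₁ F₂ (X₁ j ω)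
      = (n : ℝ) * ∑ j ∈ Finset.range n, Hfun μ F₁ F₂ (X₁ j ω) := by
    rw [Finset.sum_const, Finset.card_range, nsmul_eq_mul]
  rw [mul_sub, h2]
  field_simp

/-! ### Main theorem -/

set_option maxHeartbeats 1000000 in
/-- **Key remainder estimate.** In the one-sample bivariate setting,
`√n · B_n → 0` in probability. -/
theorem sqrt_n_Bterm_tendsto_zero
    {Ω : Type*} [MeasurableSpace Ω] (P : Measure Ω) [IsProbabilityMeasure P]
    (X₁ X₂ : ℕ → Ω → ℝ)
    (hX₁ : ∀ i, Measurable (X₁ i)) (hX₂ : ∀ i, Measurable (X₂ i))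
    -- the pairs `(X_{i,1}, X_{i,2})`, `i ∈ ℕ`, are iid
    (hindep : iIndepFun
      (fun i ω => (X₁ i ω, X₂ i ω)) P)
    (hident : ∀ i : ℕ,
      IdentDistrib (fun ω => (X₁ i ω, X₂ i ω)) (fun ω => (X₁ 0 ω, X₂ 0 ω)) P P)
    -- the marginal cdfs, assumed continuous
    (F₁ F₂ : ℝ → ℝ)
    (hF₁def : ∀ x, F₁ x = (P {ω | X₁ 0 ω ≤ x}).toReal)
    (hF₂def : ∀ x, F₂ x = (P {ω | X₂ 0 ω ≤ x}).toReal)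
    (hF₁cont : Continuous F₁) (hF₂cont : Continuous F₂)
    -- the joint cdf is continuous
    (hFcont : Continuous (fun xy : ℝ × ℝ =>
      (P {ω | X₁ 0 ω ≤ xy.1 ∧ X₂ 0 ω ≤ xy.2}).toReal)) :
    ∀ ε > (0 : ℝ),
      Tendsto (fun n : ℕ => P {ω | ε ≤ |Real.sqrt n * Bterm P X₁ X₂ F₁ F₂ n ω|})
        atTop (nhds 0) := by
  classical
  intro ε hε
  set Z : ℕ → Ω → ℝ × ℝ := fun i ω => (X₁ i ω, X₂ i ω) with hZdef
  have hZm : ∀ i, Measurable (Z i) := fun i => (hX₁ i).prodMk (hX₂ i)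
  set μ : Measure (ℝ × ℝ) := P.map (Z 0) with hμdef
  haveI hμprob : IsProbabilityMeasure μ := Measure.isProbabilityMeasure_map (hZm 0).aemeasurable
  have hmap : ∀ i, P.map (Z i) = μ := fun i => (hident i).map_eq
  have hF₁m : Measurable F₁ := hF₁cont.measurable
  have hF₂m : Measurable F₂ := hF₂cont.measurable
  have htoReal_le_one : ∀ s : Set Ω, (P s).toReal ≤ 1 := by
    intro s
    calc (P s).toReal ≤ (1 : ENNReal).toReal := ENNReal.toReal_mono ENNReal.one_ne_top prob_le_one
      _ = 1 := ENNReal.toReal_one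
  have hF₁b : ∀ x, 0 ≤ F₁ x ∧ F₁ x ≤ 1 := fun x => by
    rw [hF₁def x]; exact ⟨ENNReal.toReal_nonneg, htoReal_le_one _⟩
  have hF₂b : ∀ x, 0 ≤ F₂ x ∧ F₂ x ≤ 1 := fun x => by
    rw [hF₂def x]; exact ⟨ENNReal.toReal_nonneg, htoReal_le_one _⟩
  have hcdf : ∀ x, F₁ x = (μ {z : ℝ × ℝ | z.1 ≤ x}).toReal := by
    intro x
    rw [hF₁def x, hμdef,
      Measure.map_apply (hZm 0) (measurableSet_le measurable_fst measurable_const)]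
    rfl
  -- the summands
  set kk : ℕ × ℕ → Ω → ℝ := fun p ω => kker μ F₁ F₂ (X₁ p.2 ω) (Z p.1 ω) with hkkdef
  have hkkm : ∀ p, Measurable (kk p) := fun p =>
    (kker_measurable hF₁m hF₂m).comp ((hX₁ p.2).prodMk (hZm p.1))
  have hkkb : ∀ p ω, |kk p ω| ≤ 4 := fun p ω => kker_abs_le hF₁b hF₂b _ _
  have hTint : ∀ p q : ℕ × ℕ, Integrable (fun ω => kk p ω * kk q ω) P := by
    intro p q
    refine ⟨((hkkm p).mul (hkkm q)).aestronglyMeasurable, ?_⟩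
    refine HasFiniteIntegral.of_bounded (C := 16) (ae_of_all _ fun ω => ?_)
    rw [Real.norm_eq_abs, abs_mul]
    nlinarith [hkkb p ω, hkkb q ω, abs_nonneg (kk p ω), abs_nonneg (kk q ω)]
  have hTb : ∀ p q : ℕ × ℕ, (∫ ω, kk p ω * kk q ω ∂P) ≤ 16 := by
    intro p q
    have hb : ‖∫ ω, kk p ω * kk q ω ∂P‖ ≤ 16 * (P Set.univ).toReal := by
      refine norm_integral_le_of_norm_le_const (ae_of_all _ fun ω => ?_)
      rw [Real.norm_eq_abs, abs_mul]
      nlinarith [hkkb p ω, hkkb q ω, abs_nonneg (kk p ω), abs_nonneg (kk q ω)]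
    simp only [measure_univ, ENNReal.toReal_one, mul_one] at hb
    exact le_trans (le_abs_self _) hb
  -- vanishing of off-diagonal terms
  have hTzero : ∀ p q : ℕ × ℕ,
      ¬((p.1 = p.2 ∧ q.1 = q.2) ∨ q = p ∨ (q.1 = p.2 ∧ q.2 = p.1)) →
      ∫ ω, kk p ω * kk q ω ∂P = 0 := by
    intro p q hng
    have hcases : (p.2 ≠ p.1 ∧ p.2 ≠ q.1 ∧ p.2 ≠ q.2)
        ∨ (p.1 ≠ p.2 ∧ p.1 ≠ q.1 ∧ p.1 ≠ q.2)
        ∨ (q.2 ≠ q.1 ∧ q.2 ≠ p.1 ∧ q.2 ≠ p.2)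
        ∨ (q.1 ≠ q.2 ∧ q.1 ≠ p.1 ∧ q.1 ≠ p.2) := by
      rcases p with ⟨i, j⟩; rcases q with ⟨i', j'⟩
      simp only [Prod.mk.injEq, Prod.ext_iff] at hng ⊢
      omega
    have hswap : (fun ω => kk p ω * kk q ω) = (fun ω => kk q ω * kk p ω) :=
      funext fun ω => mul_comm _ _
    rcases hcases with ⟨h1, h2, h3⟩ | ⟨h1, h2, h3⟩ | ⟨h1, h2, h3⟩ | ⟨h1, h2, h3⟩
    · exact case_fst hZm hindep hF₁b hF₂b hF₁m hF₂m hcdf hmap p.2 p.1 q.1 q.2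
        (Ne.symm h1) (Ne.symm h2) (Ne.symm h3)
    · exact case_snd hZm hindep hF₁b hF₂b hF₁m hF₂m hmap p.1 p.2 q.1 q.2
        (Ne.symm h1) (Ne.symm h2) (Ne.symm h3)
    · rw [hswap]
      exact case_fst hZm hindep hF₁b hF₂b hF₁m hF₂m hcdf hmap q.2 q.1 p.1 p.2
        (Ne.symm h1) (Ne.symm h2) (Ne.symm h3)
    · rw [hswap]
      exact case_snd hZm hindep hF₁b hF₂b hF₁m hF₂m hmap q.1 q.2 p.1 p.2
        (Ne.symm h1) (Ne.symm h2) (Ne.symm h3)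
  -- the double sum and its second moment
  set R : ℕ → Finset (ℕ × ℕ) := fun n => Finset.range n ×ˢ Finset.range n with hR
  set S : ℕ → Ω → ℝ := fun n ω => ∑ p ∈ R n, kk p ω with hS
  have hSm : ∀ n, Measurable (S n) := fun n => Finset.measurable_sum _ fun p _ => hkkm p
  have hS2int : ∀ n : ℕ, Integrable (fun ω => (S n ω) ^ 2) P := by
    intro n
    refine ⟨((hSm n).pow_const 2).aestronglyMeasurable, ?_⟩
    refine HasFiniteIntegral.of_bounded (C := (4 * (R n).card : ℝ) ^ 2)
      (ae_of_all _ fun ω => ?_)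
    have hb : |S n ω| ≤ 4 * (R n).card := by
      calc |S n ω| ≤ ∑ p ∈ R n, |kk p ω| := Finset.abs_sum_le_sum_abs _ _
        _ ≤ ∑ _p ∈ R n, (4 : ℝ) := Finset.sum_le_sum fun p _ => hkkb p ω
        _ = (R n).card * 4 := by rw [Finset.sum_const, nsmul_eq_mul]
        _ = 4 * (R n).card := by ring
    rw [Real.norm_eq_abs, abs_pow, sq_abs, ← sq_abs]
    exact pow_le_pow_left₀ (abs_nonneg _) hb 2
  have hES2 : ∀ n : ℕ, ∫ ω, (S n ω) ^ 2 ∂P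
      = ∑ pq ∈ R n ×ˢ R n, ∫ ω, kk pq.1 ω * kk pq.2 ω ∂P := by
    intro n
    have h1 : ∀ ω, (S n ω) ^ 2 = ∑ p ∈ R n, ∑ q ∈ R n, kk p ω * kk q ω := by
      intro ω; rw [sq]; exact Finset.sum_mul_sum _ _ _ _
    calc ∫ ω, (S n ω) ^ 2 ∂P
        = ∫ ω, ∑ p ∈ R n, ∑ q ∈ R n, kk p ω * kk q ω ∂P := by
          exact integral_congr_ae (ae_of_all _ h1)
      _ = ∑ p ∈ R n, ∫ ω, ∑ q ∈ R n, kk p ω * kk q ω ∂P :=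
          integral_finset_sum _ fun p _ => integrable_finset_sum _ fun q _ => hTint p q
      _ = ∑ p ∈ R n, ∑ q ∈ R n, ∫ ω, kk p ω * kk q ω ∂P :=
          Finset.sum_congr rfl fun p _ => integral_finset_sum _ fun q _ => hTint p q
      _ = ∑ pq ∈ R n ×ˢ R n, ∫ ω, kk pq.1 ω * kk pq.2 ω ∂P := by
          rw [Finset.sum_product (f := fun pq : (ℕ × ℕ) × (ℕ × ℕ) =>
            ∫ ω, kk pq.1 ω * kk pq.2 ω ∂P)]
  -- the set of "paired" index quadruples is small
  set Good : (ℕ × ℕ) × (ℕ × ℕ) → Prop := fun pq =>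
    (pq.1.1 = pq.1.2 ∧ pq.2.1 = pq.2.2) ∨ pq.2 = pq.1
      ∨ (pq.2.1 = pq.1.2 ∧ pq.2.2 = pq.1.1) with hGood
  have hcard : ∀ n : ℕ, ((R n ×ˢ R n).filter Good).card ≤ 3 * (n * n) := by
    intro n
    have hRcard : (R n).card = n * n := by
      rw [hR]; simp [Finset.card_product]
    have hsub : (R n ×ˢ R n).filter Good
        ⊆ ((R n ×ˢ R n).filter fun pq => pq.1.1 = pq.1.2 ∧ pq.2.1 = pq.2.2)
          ∪ ((R n ×ˢ R n).filter fun pq => pq.2 = pq.1)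
          ∪ ((R n ×ˢ R n).filter fun pq => pq.2.1 = pq.1.2 ∧ pq.2.2 = pq.1.1) := by
      intro pq hpq
      rw [Finset.mem_filter] at hpq
      rcases hpq.2 with h | h | h
      · exact Finset.mem_union_left _ (Finset.mem_union_left _
          (Finset.mem_filter.mpr ⟨hpq.1, h⟩))
      · exact Finset.mem_union_left _ (Finset.mem_union_right _
          (Finset.mem_filter.mpr ⟨hpq.1, h⟩))
      · exact Finset.mem_union_right _ (Finset.mem_filter.mpr ⟨hpq.1, h⟩)
    have hc1 : ((R n ×ˢ R n).filter fun pq => pq.1.1 = pq.1.2 ∧ pq.2.1 = pq.2.2).card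
        ≤ n * n := by
      rw [← hRcard]
      refine Finset.card_le_card_of_injOn (fun pq => (pq.1.1, pq.2.1)) ?_ ?_
      · intro pq hpq
        rw [Finset.mem_coe, Finset.mem_filter, Finset.mem_product] at hpq
        have h1 := Finset.mem_product.mp hpq.1.1
        have h2 := Finset.mem_product.mp hpq.1.2
        exact Finset.mem_product.mpr ⟨h1.1, h2.1⟩
      · intro x hx y hy hxy
        simp only [Finset.coe_filter, Set.mem_setOf_eq] at hx hy
        obtain ⟨-, hx⟩ := hx; obtain ⟨-, hy⟩ := hy
        simp only [Prod.ext_iff, Prod.mk.injEq] at hx hy hxy ⊢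
        omega
    have hc2 : ((R n ×ˢ R n).filter fun pq => pq.2 = pq.1).card ≤ n * n := by
      rw [← hRcard]
      refine Finset.card_le_card_of_injOn (fun pq => pq.1) ?_ ?_
      · intro pq hpq
        rw [Finset.mem_coe, Finset.mem_filter, Finset.mem_product] at hpq
        exact hpq.1.1
      · intro x hx y hy hxy
        simp only [Finset.coe_filter, Set.mem_setOf_eq] at hx hy
        obtain ⟨-, hx⟩ := hx; obtain ⟨-, hy⟩ := hy
        simp only [Prod.ext_iff, Prod.mk.injEq] at hx hy hxy ⊢
        omega
    have hc3 : ((R n ×ˢ R n).filter fun pq => pq.2.1 = pq.1.2 ∧ pq.2.2 = pq.1.1).card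
        ≤ n * n := by
      rw [← hRcard]
      refine Finset.card_le_card_of_injOn (fun pq => pq.1) ?_ ?_
      · intro pq hpq
        rw [Finset.mem_coe, Finset.mem_filter, Finset.mem_product] at hpq
        exact hpq.1.1
      · intro x hx y hy hxy
        simp only [Finset.coe_filter, Set.mem_setOf_eq] at hx hy
        obtain ⟨-, hx⟩ := hx; obtain ⟨-, hy⟩ := hy
        simp only [Prod.ext_iff, Prod.mk.injEq] at hx hy hxy ⊢
        omega
    calc ((R n ×ˢ R n).filter Good).card
        ≤ (((R n ×ˢ R n).filter fun pq => pq.1.1 = pq.1.2 ∧ pq.2.1 = pq.2.2)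
            ∪ ((R n ×ˢ R n).filter fun pq => pq.2 = pq.1)
            ∪ ((R n ×ˢ R n).filter fun pq => pq.2.1 = pq.1.2 ∧ pq.2.2 = pq.1.1)).card :=
          Finset.card_le_card hsub
      _ ≤ _ := by
          refine le_trans (Finset.card_union_le _ _) ?_
          refine le_trans (Nat.add_le_add_right (Finset.card_union_le _ _) _) ?_
          omega
  -- second moment bound
  have hbound : ∀ n : ℕ, ∫ ω, (S n ω) ^ 2 ∂P ≤ 48 * (n : ℝ) * n := by
    intro n
    rw [hES2 n]
    have hfilter : ∑ pq ∈ R n ×ˢ R n, ∫ ω, kk pq.1 ω * kk pq.2 ω ∂P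
        = ∑ pq ∈ (R n ×ˢ R n).filter Good, ∫ ω, kk pq.1 ω * kk pq.2 ω ∂P := by
      refine (Finset.sum_filter_of_ne fun pq _ hne => ?_).symm
      by_contra hg
      exact hne (hTzero pq.1 pq.2 (by simpa [hGood] using hg))
    rw [hfilter]
    calc ∑ pq ∈ (R n ×ˢ R n).filter Good, ∫ ω, kk pq.1 ω * kk pq.2 ω ∂P
        ≤ ∑ _pq ∈ (R n ×ˢ R n).filter Good, (16 : ℝ) :=
          Finset.sum_le_sum fun pq _ => hTb pq.1 pq.2
      _ = ((R n ×ˢ R n).filter Good).card * 16 := by rw [Finset.sum_const, nsmul_eq_mul]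
      _ ≤ (3 * (n * n) : ℕ) * 16 := by
          have := hcard n
          have : (((R n ×ˢ R n).filter Good).card : ℝ) ≤ ((3 * (n * n) : ℕ) : ℝ) :=
            Nat.cast_le.mpr this
          nlinarith
      _ = 48 * (n : ℝ) * n := by push_cast; ring
  -- Chebyshev and the limit
  have hkey : ∀ n : ℕ, 1 ≤ n →
      P {ω | ε ≤ |Real.sqrt n * Bterm P X₁ X₂ F₁ F₂ n ω|}
        ≤ ENNReal.ofReal (48 / ε ^ 2 * (n : ℝ)⁻¹) := by
    intro n hn
    have hnne : (n : ℝ) ≠ 0 := Nat.cast_ne_zero.mpr (by omega)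
    have hnpos : (0 : ℝ) < n := by positivity
    have hfeq : ∀ ω, (Real.sqrt n * Bterm P X₁ X₂ F₁ F₂ n ω) ^ 2
        = ((n : ℝ)⁻¹) ^ 3 * (S n ω) ^ 2 := by
      intro ω
      rw [Bterm_eq hX₁ hX₂ hF₁m hF₂m hF₁b hF₂b hμdef n hn ω]
      rw [mul_pow, Real.sq_sqrt (Nat.cast_nonneg n), mul_pow]
      rw [hS]
      field_simp
      ring
    have hfint : Integrable (fun ω => (Real.sqrt n * Bterm P X₁ X₂ F₁ F₂ n ω) ^ 2) P := by
      have : (fun ω => (Real.sqrt n * Bterm P X₁ X₂ F₁ F₂ n ω) ^ 2)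
          = fun ω => ((n : ℝ)⁻¹) ^ 3 * (S n ω) ^ 2 := funext hfeq
      rw [this]
      exact (hS2int n).const_mul _
    have hintle : ∫ ω, (Real.sqrt n * Bterm P X₁ X₂ F₁ F₂ n ω) ^ 2 ∂P
        ≤ 48 * (n : ℝ)⁻¹ := by
      have h1 : ∫ ω, (Real.sqrt n * Bterm P X₁ X₂ F₁ F₂ n ω) ^ 2 ∂P
          = ((n : ℝ)⁻¹) ^ 3 * ∫ ω, (S n ω) ^ 2 ∂P := by
        rw [show (fun ω => (Real.sqrt n * Bterm P X₁ X₂ F₁ F₂ n ω) ^ 2)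
          = fun ω => ((n : ℝ)⁻¹) ^ 3 * (S n ω) ^ 2 from funext hfeq]
        exact integral_const_mul _ _
      rw [h1]
      have h2 : ((n : ℝ)⁻¹) ^ 3 * ∫ ω, (S n ω) ^ 2 ∂P
          ≤ ((n : ℝ)⁻¹) ^ 3 * (48 * (n : ℝ) * n) := by
        exact mul_le_mul_of_nonneg_left (hbound n) (by positivity)
      refine le_trans h2 ?_
      rw [show ((n : ℝ)⁻¹) ^ 3 * (48 * (n : ℝ) * n) = 48 * (n : ℝ)⁻¹ * ((n : ℝ) * (n : ℝ)⁻¹)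
        * ((n : ℝ) * (n : ℝ)⁻¹) by ring, mul_inv_cancel₀ hnne]
      norm_num
    have hsetid : {ω | ε ≤ |Real.sqrt n * Bterm P X₁ X₂ F₁ F₂ n ω|}
        = {ω | ε ^ 2 ≤ (Real.sqrt n * Bterm P X₁ X₂ F₁ F₂ n ω) ^ 2} := by
      ext ω
      simp only [Set.mem_setOf_eq]
      constructor
      · intro h
        nlinarith [sq_abs (Real.sqrt n * Bterm P X₁ X₂ F₁ F₂ n ω),
          abs_nonneg (Real.sqrt n * Bterm P X₁ X₂ F₁ F₂ n ω)]
      · intro h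
        nlinarith [sq_abs (Real.sqrt n * Bterm P X₁ X₂ F₁ F₂ n ω),
          abs_nonneg (Real.sqrt n * Bterm P X₁ X₂ F₁ F₂ n ω)]
    have hcheb := mul_meas_ge_le_integral_of_nonneg
      (ae_of_all P fun ω => sq_nonneg (Real.sqrt n * Bterm P X₁ X₂ F₁ F₂ n ω))
      hfint (ε ^ 2)
    have hmeas_le : (P {ω | ε ≤ |Real.sqrt n * Bterm P X₁ X₂ F₁ F₂ n ω|}).toReal
        ≤ 48 / ε ^ 2 * (n : ℝ)⁻¹ := by
      rw [hsetid]
      have hε2 : (0 : ℝ) < ε ^ 2 := by positivity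
      have h3 : ε ^ 2 * (P {ω | ε ^ 2 ≤ (Real.sqrt n * Bterm P X₁ X₂ F₁ F₂ n ω) ^ 2}).toReal
          ≤ 48 * (n : ℝ)⁻¹ := le_trans hcheb hintle
      rw [div_mul_eq_mul_div, le_div_iff₀ hε2]
      nlinarith [ENNReal.toReal_nonneg
        (a := P {ω | ε ^ 2 ≤ (Real.sqrt n * Bterm P X₁ X₂ F₁ F₂ n ω) ^ 2})]
    refine (ENNReal.le_ofReal_iff_toReal_le (measure_ne_top _ _) ?_).mpr hmeas_le
    positivity
  -- conclude by squeezing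
  have hupper : Tendsto (fun n : ℕ => ENNReal.ofReal (48 / ε ^ 2 * (n : ℝ)⁻¹))
      atTop (nhds 0) := by
    have hreal : Tendsto (fun n : ℕ => 48 / ε ^ 2 * (n : ℝ)⁻¹) atTop (nhds 0) := by
      have := tendsto_inv_atTop_nhds_zero_nat.const_mul (48 / ε ^ 2)
      simpa using this
    have := (ENNReal.continuous_ofReal.tendsto 0).comp hreal
    simpa [Function.comp_def] using this
  refine tendsto_of_tendsto_of_tendsto_of_le_of_le' tendsto_const_nhds hupper ?_ ?_
  · exact Eventually.of_forall fun n => zero_le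
  · filter_upwards [eventually_ge_atTop 1] with n hn
    exact hkey n hn

end
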